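/- arXiv:1507.08389 — 4 statements merged into one kernel-verified Lean document; each statement's English description precedes it below -/
import Mathlib

section
/- Let R be a commutative Noetherian ring, I an ideal of R, and let L →α M →β N be a complex of finitely generated R-modules (β ∘ α = 0). Suppose L' ⊆ L, M' ⊆ M, N' ⊆ N are submodules with α(L') ⊆ M' and β(M') ⊆ N'. Let c ∈ ℕ and let L₁, L₂ be submodules of L with I^c L' ⊆ L₂. For each n ≥ c, let H(n) denote the homology ker(β_n)/im(α_n) of the induced complex (L₁ + I^{n-c}L₂)/I^n L' →α_n M/I^n M' →β_n N/I^n N'. Then the sequence of sets Ass_R H(n) stabilizes, i.e., there exists N₀ such that Ass_R H(n) = Ass_R H(N₀) for all n ≥ N₀. -/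
/-!
Write `Zₙ = β⁻¹(Iⁿ N')` and `Bₙ = α(L₁) + I^(n - c) α(L₂) + Iⁿ M'`, so that `H(n) ≅ Zₙ / Bₙ`.
The module `Zₙ₊₁ / Bₙ₊₁` contains `Kₙ = (Zₙ₊₁ ∩ Bₙ) / Bₙ₊₁` with quotient embedded in `Zₙ / Bₙ`,
so once `Ass Kₙ` is constant the finite sets `Ass (Zₙ / Bₙ)` eventually decrease, hence stabilize.

By the modular law `Kₙ ≅ Δₙ / (Δₙ ∩ Bₙ₊₁)` with `Δₙ = I^(n - c) α(L₂) + (Zₙ₊₁ ∩ Iⁿ M')`, a stable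
`I`-filtration by Artin–Rees. For a stable filtration `P` and any `I`-filtration `D`, the sets
`Ass (Pₙ / Dₙ)` all lie in one finite set, since the `Pₙ / Dₙ` embed into a single finite module
over the Rees algebra; and for each prime `p`, Artin–Rees for `P ∩ (D :_M p)` shows that
`p ∈ Ass (Pₙ₊₁ / Dₙ₊₁)` forces `p ∈ Ass (Pₙ / Dₙ)` for large `n`. So `Ass (Pₙ / Dₙ)` stabilizes.
-/

universe u

open Submodule Filter

section Subquotient

variable {R M : Type*} [CommRing R] [AddCommGroup M] [Module R M]

theorem LinearMap.ker_eq_map_mkQ_comap {N : Type*} [AddCommGroup N] [Module R N]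
    {U : Submodule R M} {V : Submodule R N} {f : M →ₗ[R] N} {g : (M ⧸ U) →ₗ[R] N ⧸ V}
    (hfg : g ∘ₗ U.mkQ = V.mkQ ∘ₗ f) : LinearMap.ker g = (V.comap f).map U.mkQ := by
  rw [← map_comap_eq_of_surjective U.mkQ_surjective (LinearMap.ker g), ← LinearMap.ker_comp,
    hfg, LinearMap.ker_comp, ker_mkQ]

theorem associatedPrimes_quotient_map_mkQ {C B : Submodule R M} (hCB : C ≤ B)
    (T : Submodule R M) :
    associatedPrimes R (T.map C.mkQ ⧸ (B.map C.mkQ).comap (T.map C.mkQ).subtype) =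
      associatedPrimes R (T.map B.mkQ) := by
  have hker : LinearMap.ker (factor hCB ∘ₗ (T.map C.mkQ).subtype) =
      (B.map C.mkQ).comap (T.map C.mkQ).subtype := by
    rw [LinearMap.ker_comp, factor, ker_mapQ, Submodule.comap_id]
  have hrange : LinearMap.range (factor hCB ∘ₗ (T.map C.mkQ).subtype) = T.map B.mkQ := by
    rw [LinearMap.range_comp, range_subtype, ← map_comp, factor_comp_mk]
  rw [← hker, LinearEquiv.AssociatedPrimes.eq (LinearMap.quotKerEquivRange _), hrange]

theorem map_mkQ_inf_of_le {C B : Submodule R M} (hCB : C ≤ B) (T : Submodule R M) :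
    (T ⊓ B).map C.mkQ = T.map C.mkQ ⊓ B.map C.mkQ := by
  refine le_antisymm (map_inf_le _) ?_
  rintro _ ⟨⟨t, ht, rfl⟩, ⟨b, hb, hbt⟩⟩
  have htb : t - b ∈ C := by
    rw [← Submodule.Quotient.eq, ← mkQ_apply, ← mkQ_apply, hbt]
  refine ⟨t, ⟨ht, ?_⟩, rfl⟩
  simpa using B.add_mem (hCB htb) hb

theorem associatedPrimes_map_mkQ_subset_union {C B : Submodule R M} (hCB : C ≤ B)
    (T : Submodule R M) :
    associatedPrimes R (T.map C.mkQ) ⊆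
      associatedPrimes R ((T ⊓ B).map C.mkQ) ∪ associatedPrimes R (T.map B.mkQ) := by
  set S := (B.map C.mkQ).comap (T.map C.mkQ).subtype
  have hS : S = ((T ⊓ B).map C.mkQ).comap (T.map C.mkQ).subtype := by
    rw [map_mkQ_inf_of_le hCB, Submodule.comap_inf, comap_subtype_self, top_inf_eq]
  rw [← LinearEquiv.AssociatedPrimes.eq (comapSubtypeEquivOfLe (map_mono inf_le_left)), ← hS,
    ← associatedPrimes_quotient_map_mkQ hCB T]
  exact associatedPrimes.subset_union_of_exact S.injective_subtype (LinearMap.exact_subtype_mkQ S)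

theorem associatedPrimes_map_mkQ_mono (B : Submodule R M) {T T' : Submodule R M} (h : T ≤ T') :
    associatedPrimes R (T.map B.mkQ) ⊆ associatedPrimes R (T'.map B.mkQ) :=
  associatedPrimes.subset_of_injective (inclusion_injective (map_mono h))

theorem mem_associatedPrimes_map_mkQ_iff [IsNoetherianRing R] {T B : Submodule R M}
    {p : Ideal R} :
    p ∈ associatedPrimes R (T.map B.mkQ) ↔ p.IsPrime ∧ ∃ w ∈ T, p = B.colon {w} := by
  rw [AssociatedPrimes.mem_iff, isAssociatedPrime_iff]
  refine and_congr_right fun _ => ⟨?_, ?_⟩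
  · rintro ⟨⟨_, w, hw, rfl⟩, rfl⟩
    refine ⟨w, hw, ?_⟩
    ext r
    simp [mem_colon_singleton, Subtype.ext_iff, ← Submodule.Quotient.mk_smul,
      Submodule.Quotient.mk_eq_zero]
  · rintro ⟨w, hw, rfl⟩
    refine ⟨⟨B.mkQ w, w, hw, rfl⟩, ?_⟩
    ext r
    simp [mem_colon_singleton, Subtype.ext_iff, ← Submodule.Quotient.mk_smul,
      Submodule.Quotient.mk_eq_zero]

end Subquotient

theorem associatedPrimes.finite_of_isScalarTower {R S : Type*} [CommRing R] [CommRing S]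
    [Algebra R S] [IsNoetherianRing S] (X : Type*) [AddCommGroup X] [Module S X] [Module R X]
    [IsScalarTower R S X] [Module.Finite S X] : (associatedPrimes R X).Finite := by
  refine @IsNoetherianRing.induction_on_isQuotientEquivQuotientPrime S _ _ X _ _ ‹_›
    (fun X _ _ _ => ∀ (_ : Module R X) (_ : IsScalarTower R S X),
      (associatedPrimes R X).Finite) ?_ ?_ ?_ ‹_› ‹_›
  · intro X _ _ _ _ _ _
    simp [associatedPrimes.eq_empty_of_subsingleton]
  · intro X _ _ _ p e _ _
    refine (Set.finite_singleton (p.1.comap (algebraMap R S))).subset ?_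
    rintro q ⟨hq, x, rfl⟩
    have hx : e x ≠ 0 := fun h => hq.ne_top (by simp [(e.map_eq_zero_iff).mp h])
    -- `S ⧸ p` is a domain, so `r` kills `x ≠ 0` exactly when its image in `S` lies in `p`.
    have hann : (⊥ : Submodule R X).colon {x} = p.1.comap (algebraMap R S) := by
      ext r
      rw [mem_colon_singleton, Submodule.mem_bot, ← algebraMap_smul S r x, ← e.map_eq_zero_iff,
        map_smul, Algebra.smul_def, mul_eq_zero, Ideal.mem_comap, or_iff_left hx,
        Ideal.Quotient.algebraMap_eq, Ideal.Quotient.eq_zero_iff_mem]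
    rw [Set.mem_singleton_iff, hann, (Ideal.IsPrime.comap _).radical]
  · intro X₁ _ _ _ X₂ _ _ _ X₃ _ _ _ f g hf _ hfg ih₁ ih₃ _ _
    let _ := Module.compHom X₁ (algebraMap R S)
    let _ := Module.compHom X₃ (algebraMap R S)
    have : IsScalarTower R S X₁ := ⟨fun r s x => by rw [Algebra.smul_def, mul_smul]; rfl⟩
    have : IsScalarTower R S X₃ := ⟨fun r s x => by rw [Algebra.smul_def, mul_smul]; rfl⟩
    exact ((ih₁ _ ‹_›).union (ih₃ _ ‹_›)).subset (associatedPrimes.subset_union_of_exact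
      (f := f.restrictScalars R) (g := g.restrictScalars R) hf hfg)

theorem eventuallyConst_of_eventually_succ_subset {X : Type*} {S : ℕ → Set X}
    (hfin : ∀ n, (S n).Finite) (h : ∀ᶠ n in atTop, S (n + 1) ⊆ S n) :
    EventuallyConst S atTop := by
  obtain ⟨N, hN⟩ := eventually_atTop.mp h
  have hanti : Antitone fun k => S (N + k) :=
    antitone_nat_of_succ_le fun k => hN (N + k) (Nat.le_add_right N k)
  obtain ⟨k₀, hk₀⟩ := WellFoundedLT.antitone_chain_condition
    (f := fun k => (S (N + k)).ncard) fun _ _ hkl => Set.ncard_le_ncard (hanti hkl) (hfin _)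
  refine eventuallyConst_atTop.mpr ⟨N + k₀, fun n hn => ?_⟩
  obtain ⟨k, rfl⟩ := Nat.exists_eq_add_of_le (le_trans (Nat.le_add_right N k₀) hn)
  have hk : k₀ ≤ k := by omega
  exact Set.eq_of_subset_of_ncard_le (hanti hk) (hk₀ k hk).le (hfin _)

theorem eventually_succ_subset_of_subset_union {X : Type*} {A K : ℕ → Set X}
    (hK : EventuallyConst K atTop) (hA : ∀ n, A (n + 1) ⊆ K n ∪ A n)
    (hKA : ∀ n, K n ⊆ A (n + 1)) : ∀ᶠ n in atTop, A (n + 1) ⊆ A n := by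
  obtain ⟨N, hN⟩ := eventuallyConst_atTop_nat.mp hK
  filter_upwards [eventually_ge_atTop (N + 1)] with n hn
  obtain ⟨m, rfl⟩ := Nat.exists_eq_add_of_le' (le_trans (Nat.le_add_left 1 N) hn)
  calc A (m + 1 + 1) ⊆ K (m + 1) ∪ A (m + 1) := hA _
    _ = K m ∪ A (m + 1) := by rw [hN m (by omega)]
    _ ⊆ A (m + 1) := Set.union_subset (hKA m) le_rfl

theorem Submodule.exists_primeCompl_smul_mem_smul {R M : Type*} [CommRing R] [AddCommGroup M]
    [Module R M] (I : Ideal R) {p : Ideal R} [p.IsPrime] {X D : Submodule R M}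
    (h : ∀ y ∈ X, ∃ s ∈ p.primeCompl, s • y ∈ D) {w : M} (hw : w ∈ I • X) :
    ∃ s ∈ p.primeCompl, s • w ∈ I • D := by
  refine Submodule.smul_induction_on hw (fun a ha y hy => ?_) fun w₁ w₂ ih₁ ih₂ => ?_
  · obtain ⟨s, hs, hsy⟩ := h y hy
    exact ⟨s, hs, by rw [smul_comm]; exact smul_mem_smul ha hsy⟩
  · obtain ⟨s₁, hs₁, h₁⟩ := ih₁
    obtain ⟨s₂, hs₂, h₂⟩ := ih₂
    refine ⟨s₁ * s₂, mul_mem hs₁ hs₂, ?_⟩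
    rw [smul_add, mul_comm, mul_smul, mul_comm, mul_smul]
    exact add_mem (smul_mem _ _ h₁) (smul_mem _ _ h₂)

namespace Ideal.Filtration

variable {R M : Type*} [CommRing R] [AddCommGroup M] [Module R M] {I : Ideal R}

def comap {N : Type*} [AddCommGroup N] [Module R N] (F : I.Filtration N) (f : M →ₗ[R] N) :
    I.Filtration M where
  N n := (F.N n).comap f
  mono n := Submodule.comap_mono (F.mono n)
  smul_le n := (smul_comap_le_comap_smul f _ I).trans (Submodule.comap_mono (F.smul_le n))

def shift (F : I.Filtration M) : I.Filtration M where
  N n := F.N (n + 1)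
  mono n := F.mono (n + 1)
  smul_le n := F.smul_le (n + 1)

def delay (F : I.Filtration M) (c : ℕ) : I.Filtration M where
  N n := F.N (n - c)
  mono n := F.antitone (by omega)
  smul_le n := by
    rcases le_or_gt c n with h | h
    · rw [show n + 1 - c = n - c + 1 by omega]
      exact F.smul_le _
    · rw [show n + 1 - c = n - c by omega]
      exact smul_le_right

theorem Stable.delay {F : I.Filtration M} (hF : F.Stable) (c : ℕ) : (F.delay c).Stable := by
  obtain ⟨n₀, hn₀⟩ := hF
  refine ⟨n₀ + c, fun n hn => ?_⟩
  change I • F.N (n - c) = F.N (n + 1 - c)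
  rw [show n + 1 - c = n - c + 1 by omega]
  exact hn₀ _ (by omega)

theorem Stable.sup {F F' : I.Filtration M} (hF : F.Stable) (hF' : F'.Stable) :
    (F ⊔ F').Stable := by
  obtain ⟨n₀, hn₀⟩ := hF
  obtain ⟨n₁, hn₁⟩ := hF'
  refine ⟨max n₀ n₁, fun n hn => ?_⟩
  simp only [sup_N, Pi.sup_apply, Submodule.smul_sup]
  rw [hn₀ n (le_of_max_le_left hn), hn₁ n (le_of_max_le_right hn)]

def colonIdeal (F : I.Filtration M) (p : Ideal R) : I.Filtration M where
  N n :=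
    { carrier := {y | ∀ r ∈ p, r • y ∈ F.N n}
      add_mem' hx hy r hr := by rw [smul_add]; exact add_mem (hx r hr) (hy r hr)
      zero_mem' r _ := by rw [smul_zero]; exact zero_mem _
      smul_mem' a y hy r hr := by rw [smul_comm]; exact smul_mem _ a (hy r hr) }
  mono n _ hy r hr := F.mono n (hy r hr)
  smul_le n := Submodule.smul_le.mpr fun a ha y hy r hr => by
    rw [smul_comm]; exact F.smul_le n (smul_mem_smul ha (hy r hr))

theorem single_mem_submodule_iff (F : I.Filtration M) {n : ℕ} {x : M} :
    PolynomialModule.single R n x ∈ F.submodule ↔ x ∈ F.N n := by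
  refine ⟨fun h => by simpa using h n, fun h i => ?_⟩
  rw [PolynomialModule.coeff_single, Finsupp.single_apply]
  split_ifs with hi
  · exact hi ▸ h
  · exact zero_mem _

variable [IsNoetherianRing R] [Module.Finite R M]

/-- `P.N n / D.N n` embeds, in degree `n`, into the image of `P.submodule` in `M[X] ⧸ D.submodule`,
a finite module over the Noetherian Rees algebra. -/
theorem finite_iUnion_associatedPrimes_map_mkQ {P : I.Filtration M} (hP : P.Stable)
    (D : I.Filtration M) : (⋃ n, associatedPrimes R ((P.N n).map (D.N n).mkQ)).Finite := by
  let X := P.submodule.map D.submodule.mkQ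
  have : Module.Finite (reesAlgebra I) X := Module.Finite.iff_fg.mpr
    (((P.submodule_fg_iff_stable fun _ => IsNoetherian.noetherian _).mpr hP).map _)
  refine (associatedPrimes.finite_of_isScalarTower (S := reesAlgebra I) X).subset
    (Set.iUnion_subset fun n => ?_)
  let ψ : M ⧸ D.N n →ₗ[R] PolynomialModule R M ⧸ D.submodule :=
    (D.N n).liftQ (D.submodule.mkQ.restrictScalars R ∘ₗ PolynomialModule.lsingle R n)
      fun _ hx => (Submodule.Quotient.mk_eq_zero _).mpr (D.single_mem_submodule_iff.mpr hx)
  have hψ : Function.Injective ψ := by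
    refine LinearMap.ker_eq_bot.mp (ker_liftQ_eq_bot _ _ _ fun x hx => ?_)
    exact D.single_mem_submodule_iff.mp ((Submodule.Quotient.mk_eq_zero _).mp hx)
  let φ : (P.N n).map (D.N n).mkQ →ₗ[R] X :=
    { toFun y := ⟨ψ y, by
        obtain ⟨x, hx, hxy⟩ := y.2
        exact ⟨_, P.single_mem_submodule_iff.mpr hx, by rw [← hxy]; rfl⟩⟩
      map_add' y z := by ext1; simp
      map_smul' r y := by ext1; simp }
  exact associatedPrimes.subset_of_injective (f := φ)
    fun y z h => Subtype.ext (hψ (congrArg Subtype.val h))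

/-- By Artin–Rees, a witness `w` of `p` in degree `n + 1` lies in `I • (P ⊓ D.colonIdeal p).N n`;
if no element there were a witness in degree `n`, some `s ∉ p` would kill `w` modulo
`D.N (n + 1)`. -/
theorem eventually_mem_associatedPrimes_of_succ {P : I.Filtration M} (hP : P.Stable)
    (D : I.Filtration M) (p : Ideal R) :
    ∀ᶠ n in atTop, p ∈ associatedPrimes R ((P.N (n + 1)).map (D.N (n + 1)).mkQ) →
      p ∈ associatedPrimes R ((P.N n).map (D.N n).mkQ) := by
  obtain ⟨n₀, hn₀⟩ := hP.inter_right (F' := D.colonIdeal p)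
  filter_upwards [eventually_ge_atTop n₀] with n hn hass
  rw [mem_associatedPrimes_map_mkQ_iff] at hass ⊢
  obtain ⟨hp, w, hwP, hpw⟩ := hass
  refine ⟨hp, ?_⟩
  have hw : w ∈ I • (P ⊓ D.colonIdeal p).N n := by
    rw [hn₀ n hn]
    exact ⟨hwP, fun r hr => mem_colon_singleton.mp (hpw ▸ hr)⟩
  by_contra! hne
  have hloc : ∀ y ∈ (P ⊓ D.colonIdeal p).N n, ∃ s ∈ p.primeCompl, s • y ∈ D.N n := by
    rintro y ⟨hyP, hyK⟩
    have hle : p ≤ (D.N n).colon {y} := fun r hr => mem_colon_singleton.mpr (hyK r hr)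
    obtain ⟨s, hs, hsp⟩ := SetLike.not_le_iff_exists.mp fun h => hne y hyP (le_antisymm hle h)
    exact ⟨s, hsp, mem_colon_singleton.mp hs⟩
  obtain ⟨s, hs, hsw⟩ := exists_primeCompl_smul_mem_smul I hloc hw
  exact hs (hpw ▸ mem_colon_singleton.mpr (D.smul_le n hsw))

theorem eventuallyConst_associatedPrimes_map_mkQ {P : I.Filtration M} (hP : P.Stable)
    (D : I.Filtration M) :
    EventuallyConst (fun n => associatedPrimes R ((P.N n).map (D.N n).mkQ)) atTop := by
  refine eventuallyConst_of_eventually_succ_subset (fun _ => associatedPrimes.finite _ _) ?_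
  filter_upwards [(eventually_all_finite (finite_iUnion_associatedPrimes_map_mkQ hP D)).mpr
    fun p _ => eventually_mem_associatedPrimes_of_succ hP D p] with n hn p hp
  exact hn p (Set.mem_iUnion_of_mem _ hp) hp

end Ideal.Filtration

theorem eventuallyConst_associatedPrimes_of_connecting {R M : Type*} [CommRing R]
    [IsNoetherianRing R] [AddCommGroup M] [Module R M] [Module.Finite R M]
    {Z B : ℕ → Submodule R M} (hZ : Antitone Z) (hB : Antitone B)
    (hK : EventuallyConst
      (fun n => associatedPrimes R ((Z (n + 1) ⊓ B n).map (B (n + 1)).mkQ)) atTop) :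
    EventuallyConst (fun n => associatedPrimes R ((Z n).map (B n).mkQ)) atTop := by
  refine eventuallyConst_of_eventually_succ_subset (fun _ => associatedPrimes.finite _ _)
    (eventually_succ_subset_of_subset_union
      (A := fun n => associatedPrimes R ((Z n).map (B n).mkQ)) hK (fun n => ?_)
      fun n => associatedPrimes_map_mkQ_mono _ inf_le_left)
  exact (associatedPrimes_map_mkQ_subset_union (hB n.le_succ) _).trans
    (Set.union_subset_union_right _ (associatedPrimes_map_mkQ_mono _ (hZ n.le_succ)))

section Homology

variable {R L M N : Type*} [CommRing R] [AddCommGroup L] [Module R L] [AddCommGroup M]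
  [Module R M] [AddCommGroup N] [Module R N] (I : Ideal R) (α : L →ₗ[R] M) (β : M →ₗ[R] N)
  (M' : Submodule R M) (N' : Submodule R N) (c : ℕ) (L₁ L₂ : Submodule R L)

/-- `β⁻¹(Iⁿ N')`, whose image in `M ⧸ Iⁿ M'` is `ker βₙ`. -/
def cycleFiltration : I.Filtration M := (I.stableFiltration N').comap β

/-- `α(L₁) + I^(n - c) α(L₂) + Iⁿ M'`, whose image in `M ⧸ Iⁿ M'` is the image of `αₙ`. -/
def boundaryFiltration : I.Filtration M :=
  I.trivialFiltration (L₁.map α) ⊔ (I.stableFiltration (L₂.map α)).delay c ⊔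
    I.stableFiltration M'

def connectingFiltration : I.Filtration M :=
  (I.stableFiltration (L₂.map α)).delay c ⊔
    ((cycleFiltration I β N').shift ⊓ I.stableFiltration M')

theorem connectingFiltration_stable [IsNoetherianRing R] [Module.Finite R M] :
    (connectingFiltration I α β M' N' c L₂).Stable :=
  ((I.stableFiltration_stable _).delay c).sup (.inter_left _ (I.stableFiltration_stable M'))

variable {I α β M' N'}

theorem cycleFiltration_succ_inf_boundaryFiltration (hβα : β ∘ₗ α = 0) (hβ : M'.map β ≤ N')
    (n : ℕ) :
    (cycleFiltration I β N').N (n + 1) ⊓ (boundaryFiltration I α M' c L₁ L₂).N n =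
      (boundaryFiltration I α M' c L₁ L₂).N (n + 1) ⊔
        (connectingFiltration I α β M' N' c L₂).N n := by
  set Z := (I ^ (n + 1) • N').comap β
  change Z ⊓ (L₁.map α ⊔ I ^ (n - c) • L₂.map α ⊔ I ^ n • M') =
    (L₁.map α ⊔ I ^ (n + 1 - c) • L₂.map α ⊔ I ^ (n + 1) • M') ⊔
      (I ^ (n - c) • L₂.map α ⊔ Z ⊓ I ^ n • M')
  have hker : LinearMap.ker β ≤ Z := fun x hx => by
    simp [Z, LinearMap.mem_ker.mp hx]
  have himage (L₀ : Submodule R L) : L₀.map α ≤ Z :=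
    le_trans (fun _ ⟨l, _, hl⟩ => hl ▸ LinearMap.congr_fun hβα l) hker
  have hL₂pow : I ^ (n + 1 - c) • L₂.map α ≤ I ^ (n - c) • L₂.map α :=
    smul_mono_left (Ideal.pow_le_pow_right (by omega))
  have hM'pow : I ^ (n + 1) • M' ≤ Z ⊓ I ^ n • M' := by
    refine le_inf ?_ (smul_mono_left (Ideal.pow_le_pow_right n.le_succ))
    rw [← Submodule.map_le_iff_le_comap, map_smul'']
    exact smul_mono_right _ hβ
  rw [inf_comm, sup_inf_assoc_of_le _ (sup_le (himage L₁) (smul_le_right.trans (himage L₂))),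
    inf_comm, ← sup_eq_right.mpr hL₂pow, ← sup_eq_right.mpr hM'pow]
  ac_rfl

theorem eventuallyConst_associatedPrimes_cycleFiltration_map_mkQ [IsNoetherianRing R]
    [Module.Finite R M] (hβα : β ∘ₗ α = 0) (hβ : M'.map β ≤ N') :
    EventuallyConst (fun n => associatedPrimes R (((cycleFiltration I β N').N n).map
      ((boundaryFiltration I α M' c L₁ L₂).N n).mkQ)) atTop := by
  refine eventuallyConst_associatedPrimes_of_connecting (cycleFiltration I β N').antitone
    (boundaryFiltration I α M' c L₁ L₂).antitone ?_
  convert Ideal.Filtration.eventuallyConst_associatedPrimes_map_mkQ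
    (connectingFiltration_stable I α β M' N' c L₂) (boundaryFiltration I α M' c L₁ L₂).shift
    using 2 with n
  rw [cycleFiltration_succ_inf_boundaryFiltration c L₁ L₂ hβα hβ, Submodule.map_sup,
    mkQ_map_self, bot_sup_eq]
  rfl

theorem associatedPrimes_homology_eq {n : ℕ}
    {βₙ : (M ⧸ (I ^ n • M' : Submodule R M)) →ₗ[R] N ⧸ (I ^ n • N' : Submodule R N)}
    (hβₙ : βₙ ∘ₗ (I ^ n • M' : Submodule R M).mkQ = (I ^ n • N' : Submodule R N).mkQ ∘ₗ β) :
    associatedPrimes R (LinearMap.ker βₙ ⧸ (((L₁ ⊔ I ^ (n - c) • L₂).map α).map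
        (I ^ n • M' : Submodule R M).mkQ).comap (LinearMap.ker βₙ).subtype) =
      associatedPrimes R (((cycleFiltration I β N').N n).map
        ((boundaryFiltration I α M' c L₁ L₂).N n).mkQ) := by
  have himage : ((L₁ ⊔ I ^ (n - c) • L₂).map α).map (I ^ n • M' : Submodule R M).mkQ =
      ((boundaryFiltration I α M' c L₁ L₂).N n).map (I ^ n • M' : Submodule R M).mkQ := by
    change _ = (L₁.map α ⊔ I ^ (n - c) • L₂.map α ⊔ I ^ n • M').map _
    rw [Submodule.map_sup _ (I ^ n • M'), mkQ_map_self, sup_bot_eq, Submodule.map_sup,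
      map_smul'']
  rw [LinearMap.ker_eq_map_mkQ_comap hβₙ, himage]
  exact associatedPrimes_quotient_map_mkQ le_sup_right _

end Homology

theorem homology_associatedPrimes_stabilize_general
    {R : Type u} [CommRing R] [IsNoetherianRing R] (I : Ideal R)
    {L M N : Type u} [AddCommGroup L] [Module R L] [AddCommGroup M] [Module R M]
    [AddCommGroup N] [Module R N]
    [Module.Finite R M]
    (α : L →ₗ[R] M) (β : M →ₗ[R] N) (hβα : β ∘ₗ α = 0)
    (M' : Submodule R M) (N' : Submodule R N)
    (hβ : M'.map β ≤ N')
    (c : ℕ) (L₁ L₂ : Submodule R L)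
    (β' : ∀ n : ℕ, (M ⧸ (I ^ n • M' : Submodule R M)) →ₗ[R] (N ⧸ (I ^ n • N' : Submodule R N)))
    (hβ' : ∀ n : ℕ, (β' n) ∘ₗ (I ^ n • M' : Submodule R M).mkQ
      = (I ^ n • N' : Submodule R N).mkQ ∘ₗ β) :
    ∃ N₀ : ℕ, c ≤ N₀ ∧ ∀ n : ℕ, N₀ ≤ n →
      associatedPrimes R
        (↥(LinearMap.ker (β' n)) ⧸
          (Submodule.comap (LinearMap.ker (β' n)).subtype
            (((L₁ ⊔ I ^ (n - c) • L₂).map α).map (I ^ n • M' : Submodule R M).mkQ))) =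
      associatedPrimes R
        (↥(LinearMap.ker (β' N₀)) ⧸
          (Submodule.comap (LinearMap.ker (β' N₀)).subtype
            (((L₁ ⊔ I ^ (N₀ - c) • L₂).map α).map (I ^ N₀ • M' : Submodule R M).mkQ))) := by
  obtain ⟨n₀, hn₀⟩ := eventuallyConst_atTop.mp
    (eventuallyConst_associatedPrimes_cycleFiltration_map_mkQ (I := I) c L₁ L₂ hβα hβ)
  refine ⟨max c n₀, le_max_left c n₀, fun n hn => ?_⟩
  rw [associatedPrimes_homology_eq c L₁ L₂ (hβ' n), associatedPrimes_homology_eq c L₁ L₂ (hβ' _),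
    hn₀ n (le_of_max_le_right hn), hn₀ _ (le_max_right c n₀)]

/-- Let `R` be a commutative Noetherian ring, `I` an ideal, and
`L →α M →β N` a complex of finitely generated `R`-modules with submodules
`L' ⊆ L`, `M' ⊆ M`, `N' ⊆ N` satisfying `α(L') ⊆ M'` and `β(M') ⊆ N'`.  Let `c ∈ ℕ` and
`L₁, L₂ ⊆ L` with `I^c L' ⊆ L₂`.  For `n ≥ c`, let `H(n)` be the homology
`ker(βₙ)/im(αₙ)` of the induced complex
`(L₁ + I^{n-c}L₂)/IⁿL' →αₙ M/IⁿM' →βₙ N/IⁿN'`.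
Here `βₙ` is the map induced by `β` on the quotients (characterized by
`βₙ ∘ mkQ = mkQ ∘ β`), and the image of `αₙ` is the image of `L₁ + I^{n-c}L₂` under
`mkQ ∘ α`; the homology is the quotient of `ker βₙ` by the image of `αₙ` (intersected
with `ker βₙ`, which does not change it since the sequence is a complex).
Then the sets `Ass_R H(n)` stabilize. -/
theorem homology_associatedPrimes_stabilize
    {R : Type u} [CommRing R] [IsNoetherianRing R] (I : Ideal R)
    {L M N : Type u} [AddCommGroup L] [Module R L] [AddCommGroup M] [Module R M]
    [AddCommGroup N] [Module R N]
    [Module.Finite R L] [Module.Finite R M] [Module.Finite R N]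
    (α : L →ₗ[R] M) (β : M →ₗ[R] N) (hβα : β ∘ₗ α = 0)
    (L' : Submodule R L) (M' : Submodule R M) (N' : Submodule R N)
    (hα : L'.map α ≤ M') (hβ : M'.map β ≤ N')
    (c : ℕ) (L₁ L₂ : Submodule R L) (hL₂ : I ^ c • L' ≤ L₂)
    (β' : ∀ n : ℕ, (M ⧸ (I ^ n • M' : Submodule R M)) →ₗ[R] (N ⧸ (I ^ n • N' : Submodule R N)))
    (hβ' : ∀ n : ℕ, (β' n) ∘ₗ (I ^ n • M' : Submodule R M).mkQ
      = (I ^ n • N' : Submodule R N).mkQ ∘ₗ β) :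
    ∃ N₀ : ℕ, c ≤ N₀ ∧ ∀ n : ℕ, N₀ ≤ n →
      associatedPrimes R
        (↥(LinearMap.ker (β' n)) ⧸
          (Submodule.comap (LinearMap.ker (β' n)).subtype
            (((L₁ ⊔ I ^ (n - c) • L₂).map α).map (I ^ n • M' : Submodule R M).mkQ))) =
      associatedPrimes R
        (↥(LinearMap.ker (β' N₀)) ⧸
          (Submodule.comap (LinearMap.ker (β' N₀)).subtype
            (((L₁ ⊔ I ^ (N₀ - c) • L₂).map α).map (I ^ N₀ • M' : Submodule R M).mkQ))) :=
  homology_associatedPrimes_stabilize_general I α β hβα M' N' hβ c L₁ L₂ β' hβ'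
end

section
/- Let R be a commutative Noetherian ring and let {F_λ}_{λ∈Λ} be a direct system, indexed by a directed partially ordered set Λ, of covariant R-linear functors from finitely generated R-modules to themselves, with natural transformations T_λ : F_λ → F to a covariant R-linear functor F such that for every finitely generated R-module N, the module F(N) together with the maps (T_λ)_N is the colimit of the directed system {F_λ(N)}. If F is finitely generated, then there exists λ₀ ∈ Λ such that (T_{λ₀})_N : F_{λ₀}(N) → F(N) is surjective for every finitely generated R-module N. In particular, if every (T_λ)_N is injective, then T_λ is a natural isomorphism for every λ ≥ λ₀. -/
/-!
By Yoneda, a surjection `h_K → F` amounts to an element `x ∈ F(K)` from which every element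
of every `F(X)` is obtained by applying `F(φ)` for some `φ : K → X`. Since `F(K)` is the colimit,
`x` lifts to some `F_{λ₀}(K)`, and naturality of `T_{λ₀}` then makes every `(T_{λ₀})_X`
surjective; surjectivity passes to all `λ ≥ λ₀` because `T_{λ₀}` factors through `T_λ`.
-/

open CategoryTheory

universe u v

/-- A covariant `R`-linear functor `F` on finitely generated `R`-modules is *finitely
generated* if there is an objectwise surjective natural transformation `h_K → F`,
where `h_K = Hom_R(K, -)` for some finitely generated `R`-module `K`. -/
def CategoryTheory.Functor.IsFinitelyGeneratedFunctor {R : Type u} [CommRing R]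
    (F : FGModuleCat R ⥤ FGModuleCat R) : Prop :=
  ∃ (K : FGModuleCat R) (T : ∀ X : FGModuleCat R, (K ⟶ X) →ₗ[R] F.obj X),
    (∀ (X Y : FGModuleCat R) (g : X ⟶ Y) (φ : K ⟶ X), F.map g (T X φ) = T Y (φ ≫ g)) ∧
    (∀ X : FGModuleCat R, Function.Surjective (T X))

theorem FGModuleCat.isIso_of_bijective {R : Type u} [Ring R] {X Y : FGModuleCat R} (f : X ⟶ Y)
    (hf : Function.Bijective f) : IsIso f :=
  have : IsIso ((ObjectProperty.ι _).map f) := (ConcreteCategory.isIso_iff_bijective _).mpr hf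
  isIso_of_reflects_iso f (ObjectProperty.ι _)

theorem CategoryTheory.Functor.IsFinitelyGeneratedFunctor.exists_generator {R : Type u}
    [CommRing R] {F : FGModuleCat R ⥤ FGModuleCat R} (hF : F.IsFinitelyGeneratedFunctor) :
    ∃ (K : FGModuleCat R) (x : F.obj K), ∀ (X : FGModuleCat R) (y : F.obj X),
      ∃ φ : K ⟶ X, F.map φ x = y := by
  obtain ⟨K, S, hS, hS_surj⟩ := hF
  refine ⟨K, S K (𝟙 K), fun X y => ?_⟩
  obtain ⟨φ, rfl⟩ := hS_surj X y
  exact ⟨φ, by rw [hS, Category.id_comp]⟩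

section
variable {C D : Type*} [Category C] [Category D] {FD : D → D → Type*} {CD : D → Type*}
  [∀ X Y, FunLike (FD X Y) (CD X) (CD Y)] [ConcreteCategory D FD]

theorem CategoryTheory.NatTrans.surjective_app_of_generator_mem_range {G F : C ⥤ D}
    (T : G ⟶ F) {K : C} {x : ToType (F.obj K)}
    (hx : ∀ (X : C) (y : ToType (F.obj X)), ∃ φ : K ⟶ X, F.map φ x = y)
    (hxT : x ∈ Set.range (T.app K)) (X : C) : Function.Surjective (T.app X) := by
  obtain ⟨z, rfl⟩ := hxT
  intro y
  obtain ⟨φ, rfl⟩ := hx X y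
  exact ⟨G.map φ z, NatTrans.naturality_apply T φ z⟩

theorem CategoryTheory.NatTrans.surjective_app_of_surjective_app_comp {F G H : C ⥤ D}
    (α : F ⟶ G) (β : G ⟶ H) (X : C) (h : Function.Surjective ((α ≫ β).app X)) :
    Function.Surjective (β.app X) := by
  intro y
  obtain ⟨z, rfl⟩ := h y
  exact ⟨α.app X z, by simp⟩
end

theorem direct_system_functor_stabilizes_general
    {R : Type u} [CommRing R]
    {Λ : Type v} [Preorder Λ]
    (Fl : Λ → (FGModuleCat R ⥤ FGModuleCat R))
    (t : ∀ {l m : Λ}, l ≤ m → (Fl l ⟶ Fl m))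
    (F : FGModuleCat R ⥤ FGModuleCat R)
    (T : ∀ l : Λ, Fl l ⟶ F)
    (hT : ∀ {l m : Λ} (h : l ≤ m), t h ≫ T m = T l)
    (hsurj : ∀ (X : FGModuleCat R) (x : F.obj X), ∃ (l : Λ) (y : (Fl l).obj X),
      (T l).app X y = x)
    (hF : F.IsFinitelyGeneratedFunctor) :
    ∃ l₀ : Λ, (∀ X : FGModuleCat R, Function.Surjective ((T l₀).app X)) ∧
      ((∀ (l : Λ) (X : FGModuleCat R), Function.Injective ((T l).app X)) →
        ∀ m : Λ, l₀ ≤ m → IsIso (T m)) := by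
  obtain ⟨K, x, hx⟩ := hF.exists_generator
  obtain ⟨l₀, y, hy⟩ := hsurj K x
  have hl₀ := (T l₀).surjective_app_of_generator_mem_range hx ⟨y, hy⟩
  refine ⟨l₀, hl₀, fun hinj m hm => ?_⟩
  have hm_surj (X : FGModuleCat R) : Function.Surjective ((T m).app X) :=
    NatTrans.surjective_app_of_surjective_app_comp (t hm) (T m) X (by rw [hT hm]; exact hl₀ X)
  have (X : FGModuleCat R) : IsIso ((T m).app X) :=
    FGModuleCat.isIso_of_bijective _ ⟨hinj m X, hm_surj X⟩
  exact NatIso.isIso_of_isIso_app (T m)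

/-- Let `R` be a commutative Noetherian ring and `{F_λ}` a direct
system, over a directed poset `Λ`, of covariant `R`-linear functors on finitely
generated `R`-modules, with transition natural transformations `t : F_λ → F_μ`
(`λ ≤ μ`) satisfying the usual compatibilities, and natural transformations
`T_λ : F_λ → F` compatible with the transitions, such that each `F(X)` together with
the maps `(T_λ)_X` is the colimit of the directed system `{F_λ(X)}` (expressed by the
standard directed-colimit conditions: joint surjectivity, and every element killed by
`T_λ` dies at some later stage).  If `F` is finitely generated, then there is `λ₀` such
that `(T_{λ₀})_X` is surjective for every `X`; in particular, if every `(T_λ)_X` is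
injective, then `T_μ` is a natural isomorphism for every `μ ≥ λ₀`. -/
theorem direct_system_functor_stabilizes
    {R : Type u} [CommRing R] [IsNoetherianRing R]
    {Λ : Type v} [Preorder Λ] [IsDirected Λ (· ≤ ·)]
    (Fl : Λ → (FGModuleCat R ⥤ FGModuleCat R))
    [∀ l, (Fl l).Additive] [∀ l, (Fl l).Linear R]
    (t : ∀ {l m : Λ}, l ≤ m → (Fl l ⟶ Fl m))
    (ht_refl : ∀ l : Λ, t (le_refl l) = 𝟙 (Fl l))
    (ht_comp : ∀ {l m k : Λ} (h₁ : l ≤ m) (h₂ : m ≤ k), t h₁ ≫ t h₂ = t (h₁.trans h₂))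
    (F : FGModuleCat R ⥤ FGModuleCat R) [F.Additive] [F.Linear R]
    (T : ∀ l : Λ, Fl l ⟶ F)
    (hT : ∀ {l m : Λ} (h : l ≤ m), t h ≫ T m = T l)
    (hsurj : ∀ (X : FGModuleCat R) (x : F.obj X), ∃ (l : Λ) (y : (Fl l).obj X),
      (T l).app X y = x)
    (hker : ∀ (l : Λ) (X : FGModuleCat R) (y : (Fl l).obj X), (T l).app X y = 0 →
      ∃ (m : Λ) (h : l ≤ m), (t h).app X y = 0)
    (hF : F.IsFinitelyGeneratedFunctor) :
    ∃ l₀ : Λ, (∀ X : FGModuleCat R, Function.Surjective ((T l₀).app X)) ∧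
      ((∀ (l : Λ) (X : FGModuleCat R), Function.Injective ((T l).app X)) →
        ∀ m : Λ, l₀ ≤ m → IsIso (T m)) :=
  direct_system_functor_stabilizes_general Fl t F T hT hsurj hF
end

section
/- Let R be a commutative ring and S a nonempty subset of R. Consider the conditions: (a) S is coprincipal, i.e., there exists s ∈ S with s ∈ ⋂_{r∈S} Rr; (b) there exist commutative rings R₁, R₂ and a ring isomorphism φ : R ≅ R₁ × R₂ such that φ(S) contains an element of the form (u, 0) with u a unit of R₁, and for every s ∈ S, writing φ(s) = (s₁, s₂), the element s₁ is a unit of R₁. Then (b) implies (a); and if moreover S is multiplicatively closed (closed under products and containing some element), then (a) implies (b). -/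
/-!
If `φ : R ≃+* R₁ × R₂` sends `s` to `(u, 0)` and `(φ r).1` is a unit, then `φ r` divides `(u, 0)`
componentwise, so `r ∣ s`.

Conversely, if `s ∈ S` is divisible by every element of `S` and `S` is multiplicatively closed,
then `s ∣ s ^ 2`, say `s = b s²`, so `e = b s` is an idempotent with `e s = s`. Splitting
`R ≅ R/(1 - e) × R/(e)` sends `s` to `(unit, 0)`: in `R/(1 - e)` the image of `b` inverts `s`,
and every `r ∈ S` divides `s`, hence also becomes a unit there.
-/

open Ideal

section

variable {R : Type*} [CommRing R]

theorem dvd_of_ringEquiv_prod_eq_mk_zero {A B : Type*} [CommRing A] [CommRing B]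
    (φ : R ≃+* A × B) {s r : R} {u : A} (hs : φ s = (u, 0)) (hr : IsUnit (φ r).1) : r ∣ s :=
  (map_dvd_iff φ).1 (hs ▸ prod_dvd_iff.2 ⟨hr.dvd, dvd_zero _⟩)

theorem isIdempotentElem_mul_of_eq_mul_mul_self {s b : R} (h : s = b * (s * s)) :
    IsIdempotentElem (b * s) := by
  rw [IsIdempotentElem, show b * s * (b * s) = b * (b * (s * s)) by ring, ← h]

noncomputable def quotientProdEquivOfIsIdempotentElem {e : R} (he : IsIdempotentElem e) :
    R ≃+* (R ⧸ span {1 - e}) × (R ⧸ span {e}) :=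
  RingEquiv.ofBijective _ <|
    RingHom.prod_bijective_of_isIdempotentElem he.one_sub he (sub_add_cancel 1 e)
      he.one_sub_mul_self

@[simp]
theorem quotientProdEquivOfIsIdempotentElem_apply {e : R} (he : IsIdempotentElem e) (x : R) :
    quotientProdEquivOfIsIdempotentElem he x = (Ideal.Quotient.mk _ x, Ideal.Quotient.mk _ x) :=
  rfl

theorem isUnit_mk_span_one_sub_mul (b s : R) :
    IsUnit (Ideal.Quotient.mk (span {1 - b * s}) s) := by
  refine .of_mul_eq_one (Ideal.Quotient.mk _ b) ?_
  rw [← map_mul, ← map_one (Ideal.Quotient.mk (span {1 - b * s})), Ideal.Quotient.eq,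
    mem_span_singleton']
  exact ⟨-1, by ring⟩

theorem mk_span_eq_zero_of_eq_mul_mul_self {s b : R} (h : s = b * (s * s)) :
    Ideal.Quotient.mk (span {b * s}) s = 0 := by
  rw [Ideal.Quotient.eq_zero_iff_mem, mem_span_singleton]
  exact ⟨s, by rw [mul_assoc, ← h]⟩

end

theorem coprincipal_iff_ring_decomposition_general
    {R : Type u} [CommRing R] (S : Set R) :
    ((∃ (R₁ R₂ : CommRingCat.{u}) (φ : R ≃+* (R₁ × R₂)),
        (∃ s ∈ S, ∃ u : (R₁ : Type u)ˣ, φ s = ((u : R₁), (0 : R₂))) ∧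
        (∀ s ∈ S, IsUnit (φ s).1)) →
      (∃ s ∈ S, ∀ r ∈ S, ∃ a : R, s = a * r)) ∧
    ((∀ a ∈ S, ∀ b ∈ S, a * b ∈ S) →
      (∃ s ∈ S, ∀ r ∈ S, ∃ a : R, s = a * r) →
      (∃ (R₁ R₂ : CommRingCat.{u}) (φ : R ≃+* (R₁ × R₂)),
        (∃ s ∈ S, ∃ u : (R₁ : Type u)ˣ, φ s = ((u : R₁), (0 : R₂))) ∧
        (∀ s ∈ S, IsUnit (φ s).1))) := by
  refine ⟨?_, fun hmul ⟨s, hs, hcop⟩ => ?_⟩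
  · rintro ⟨R₁, R₂, φ, ⟨s, hs, u, hsu⟩, hunit⟩
    refine ⟨s, hs, fun r hr => ?_⟩
    obtain ⟨a, ha⟩ := dvd_of_ringEquiv_prod_eq_mk_zero φ hsu (hunit r hr)
    exact ⟨a, ha.trans (mul_comm r a)⟩
  · obtain ⟨b, hb⟩ := hcop (s * s) (hmul s hs s hs)
    have hsunit := isUnit_mk_span_one_sub_mul b s
    refine ⟨.of _, .of _, quotientProdEquivOfIsIdempotentElem
      (isIdempotentElem_mul_of_eq_mul_mul_self hb), ⟨s, hs, hsunit.unit, ?_⟩, fun r hr => ?_⟩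
    · simp [mk_span_eq_zero_of_eq_mul_mul_self hb]
    · obtain ⟨a, ha⟩ := hcop r hr
      exact isUnit_of_dvd_unit (map_dvd _ ⟨a, ha.trans (mul_comm a r)⟩) hsunit

/-- Let `R` be a commutative ring and `S` a nonempty subset of `R`.
Consider the conditions:
(a) `S` is coprincipal, i.e. there exists `s ∈ S` with `s ∈ Rr` for every `r ∈ S`;
(b) there are commutative rings `R₁`, `R₂` and a ring isomorphism `φ : R ≅ R₁ × R₂`
such that `φ(S)` contains an element `(u, 0)` with `u ∈ R₁ˣ`, and `(φ s).1` is a unit of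
`R₁` for every `s ∈ S`.
Then (b) implies (a), and if `S` is moreover multiplicatively closed then (a)
implies (b). -/
theorem coprincipal_iff_ring_decomposition
    {R : Type u} [CommRing R] (S : Set R) (hne : S.Nonempty) :
    ((∃ (R₁ R₂ : CommRingCat.{u}) (φ : R ≃+* (R₁ × R₂)),
        (∃ s ∈ S, ∃ u : (R₁ : Type u)ˣ, φ s = ((u : R₁), (0 : R₂))) ∧
        (∀ s ∈ S, IsUnit (φ s).1)) →
      (∃ s ∈ S, ∀ r ∈ S, ∃ a : R, s = a * r)) ∧
    ((∀ a ∈ S, ∀ b ∈ S, a * b ∈ S) →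
      (∃ s ∈ S, ∀ r ∈ S, ∃ a : R, s = a * r) →
      (∃ (R₁ R₂ : CommRingCat.{u}) (φ : R ≃+* (R₁ × R₂)),
        (∃ s ∈ S, ∃ u : (R₁ : Type u)ˣ, φ s = ((u : R₁), (0 : R₂))) ∧
        (∀ s ∈ S, IsUnit (φ s).1))) :=
  coprincipal_iff_ring_decomposition_general S
end

section
/- Let R be a Dedekind domain, I an ideal of R and M a finitely generated R-module. Then there exists N₀ such that the R-modules I^n M / I^{n+1} M for n ≥ N₀ are all isomorphic to each other. In particular, for any covariant R-linear functor F from R-modules to R-modules, the sequence of sets Ass_R F(I^n M / I^{n+1} M) stabilizes. -/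
/-!
A Dedekind domain is locally principal, so every ideal `I` has an element `t` with
`I = I² + (t)`. Then `Iⁿ⁺¹M = tIⁿM + Iⁿ⁺²M`, i.e. multiplication by `t` maps `IⁿM/Iⁿ⁺¹M`
onto `Iⁿ⁺¹M/Iⁿ⁺²M`. All graded pieces are therefore quotients of the Noetherian module `M/IM`
by an increasing chain of kernels, which stabilizes; from then on the pieces are isomorphic,
and so are their images under any functor.
-/

open CategoryTheory

universe u

lemma IsDedekindDomain.exists_sq_sup_span_eq {R : Type*} [CommRing R] [IsDedekindDomain R]
    (I : Ideal R) : ∃ t ∈ I, I ^ 2 ⊔ Ideal.span {t} = I := by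
  by_cases hI : I = ⊥
  · exact ⟨0, by simp [hI]⟩
  obtain ⟨t, ht⟩ := exists_sup_span_eq (Ideal.pow_le_self two_ne_zero) (pow_ne_zero 2 hI)
  exact ⟨t, ht ▸ Ideal.mem_sup_right (Ideal.mem_span_singleton_self t), ht⟩

section SurjectiveChain

variable {R : Type*} [Ring R] {N : ℕ → Type*} [∀ n, AddCommGroup (N n)]
  [∀ n, Module R (N n)] (f : ∀ n, N n →ₗ[R] N (n + 1))

def LinearMap.chainFromZero : ∀ n, N 0 →ₗ[R] N n
  | 0 => LinearMap.id
  | n + 1 => f n ∘ₗ chainFromZero n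

lemma LinearMap.chainFromZero_surjective (hf : ∀ n, Function.Surjective (f n)) (n : ℕ) :
    Function.Surjective (chainFromZero f n) := by
  induction n with
  | zero => exact Function.surjective_id
  | succ n ih => exact (hf n).comp ih

lemma LinearMap.exists_linearEquiv_of_surjective_chain [IsNoetherian R (N 0)]
    (hf : ∀ n, Function.Surjective (f n)) :
    ∃ N₀ : ℕ, ∀ n, N₀ ≤ n → Nonempty (N n ≃ₗ[R] N N₀) := by
  have hmono : Monotone fun n => LinearMap.ker (chainFromZero f n) :=
    monotone_nat_of_le_succ fun n => LinearMap.ker_le_ker_comp (chainFromZero f n) (f n)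
  obtain ⟨N₀, hstab⟩ := monotone_stabilizes_iff_noetherian.mpr inferInstance ⟨_, hmono⟩
  refine ⟨N₀, fun n hn => ⟨?_⟩⟩
  exact
    ((chainFromZero f n).quotKerEquivOfSurjective (chainFromZero_surjective f hf n)).symm ≪≫ₗ
    Submodule.quotEquivOfEq _ _ (hstab n hn).symm ≪≫ₗ
    (chainFromZero f N₀).quotKerEquivOfSurjective (chainFromZero_surjective f hf N₀)

end SurjectiveChain

namespace Ideal

open scoped Pointwise

variable {R : Type*} [CommRing R] (I : Ideal R) (M : Type*) [AddCommGroup M] [Module R M]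

abbrev gradedPiece (n : ℕ) : Type _ :=
  ↥(I ^ n • (⊤ : Submodule R M)) ⧸
    Submodule.comap (I ^ n • (⊤ : Submodule R M)).subtype
      (I ^ (n + 1) • (⊤ : Submodule R M))

variable {I M}

lemma smul_mem_pow_succ_smul_top {t : R} (ht : t ∈ I) {n : ℕ} {x : M}
    (hx : x ∈ I ^ n • (⊤ : Submodule R M)) : t • x ∈ I ^ (n + 1) • (⊤ : Submodule R M) := by
  rw [pow_succ', mul_smul]
  exact Submodule.smul_mem_smul ht hx

def gradedPieceMul {t : R} (ht : t ∈ I) (n : ℕ) :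
    gradedPiece I M n →ₗ[R] gradedPiece I M (n + 1) :=
  Submodule.mapQ _ _
    ((t • (I ^ n • (⊤ : Submodule R M)).subtype).codRestrict _
      fun x => smul_mem_pow_succ_smul_top ht x.2)
    fun _ hx => smul_mem_pow_succ_smul_top ht hx

lemma pow_succ_smul_top_eq_of_sq_sup_span_eq {t : R} (hI : I ^ 2 ⊔ span {t} = I) (n : ℕ) :
    I ^ (n + 1) • (⊤ : Submodule R M) =
      I ^ (n + 2) • (⊤ : Submodule R M) ⊔ t • (I ^ n • (⊤ : Submodule R M)) := by
  have hpow : I ^ (n + 1) = I ^ (n + 2) ⊔ span {t} * I ^ n := by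
    calc I ^ (n + 1) = I * I ^ n := pow_succ' I n
      _ = (I ^ 2 ⊔ span {t}) * I ^ n := by rw [hI]
      _ = I ^ (n + 2) ⊔ span {t} * I ^ n := by rw [sup_mul, ← pow_add, add_comm 2]
  rw [hpow, Submodule.sup_smul, mul_smul, Submodule.ideal_span_singleton_smul]

lemma gradedPieceMul_surjective {t : R} (ht : t ∈ I) (hI : I ^ 2 ⊔ span {t} = I) (n : ℕ) :
    Function.Surjective (gradedPieceMul (M := M) ht n) := by
  intro z
  obtain ⟨⟨y, hy⟩, rfl⟩ := Submodule.Quotient.mk_surjective _ z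
  rw [pow_succ_smul_top_eq_of_sq_sup_span_eq hI] at hy
  obtain ⟨v, hv, _, ⟨w, hw, rfl⟩, rfl⟩ := Submodule.mem_sup.mp hy
  refine ⟨Submodule.Quotient.mk ⟨w, hw⟩, (Submodule.Quotient.eq _).mpr ?_⟩
  simpa [Submodule.mem_comap] using neg_mem hv

end Ideal

lemma associatedPrimes_functor_obj_eq_of_linearEquiv {R : Type u} [CommRing R]
    (F : ModuleCat.{u} R ⥤ ModuleCat.{u} R) {A B : Type u} [AddCommGroup A] [Module R A]
    [AddCommGroup B] [Module R B] (e : A ≃ₗ[R] B) :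
    associatedPrimes R (F.obj (ModuleCat.of R A)) =
      associatedPrimes R (F.obj (ModuleCat.of R B)) :=
  LinearEquiv.AssociatedPrimes.eq (F.mapIso e.toModuleIso).toLinearEquiv

theorem dedekind_graded_pieces_eventually_isomorphic_general
    {R : Type u} [CommRing R] [IsDedekindDomain R] (I : Ideal R)
    (M : Type u) [AddCommGroup M] [Module R M] [Module.Finite R M] :
    (∃ N₀ : ℕ, ∀ n : ℕ, N₀ ≤ n →
      Nonempty
        ((↥(I ^ n • (⊤ : Submodule R M)) ⧸
            (Submodule.comap (I ^ n • (⊤ : Submodule R M)).subtype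
              (I ^ (n + 1) • (⊤ : Submodule R M)))) ≃ₗ[R]
         (↥(I ^ N₀ • (⊤ : Submodule R M)) ⧸
            (Submodule.comap (I ^ N₀ • (⊤ : Submodule R M)).subtype
              (I ^ (N₀ + 1) • (⊤ : Submodule R M)))))) ∧
    (∀ (F : ModuleCat.{u} R ⥤ ModuleCat.{u} R) [F.Additive] [F.Linear R],
      ∃ N₀ : ℕ, ∀ n : ℕ, N₀ ≤ n →
        associatedPrimes R (F.obj (ModuleCat.of R
          (↥(I ^ n • (⊤ : Submodule R M)) ⧸
            (Submodule.comap (I ^ n • (⊤ : Submodule R M)).subtype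
              (I ^ (n + 1) • (⊤ : Submodule R M)))))) =
        associatedPrimes R (F.obj (ModuleCat.of R
          (↥(I ^ N₀ • (⊤ : Submodule R M)) ⧸
            (Submodule.comap (I ^ N₀ • (⊤ : Submodule R M)).subtype
              (I ^ (N₀ + 1) • (⊤ : Submodule R M))))))) := by
  obtain ⟨t, ht, hI⟩ := IsDedekindDomain.exists_sq_sup_span_eq I
  have hpieces :
      ∃ N₀ : ℕ, ∀ n, N₀ ≤ n → Nonempty (I.gradedPiece M n ≃ₗ[R] I.gradedPiece M N₀) :=
    LinearMap.exists_linearEquiv_of_surjective_chain _ (Ideal.gradedPieceMul_surjective ht hI)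
  refine ⟨hpieces, fun F _ _ => ?_⟩
  obtain ⟨N₀, hN₀⟩ := hpieces
  exact ⟨N₀, fun n hn => associatedPrimes_functor_obj_eq_of_linearEquiv F (hN₀ n hn).some⟩

/-- Let `R` be a Dedekind domain, `I` an ideal of `R` and `M` a
finitely generated `R`-module.  Then the modules `IⁿM/Iⁿ⁺¹M` are all isomorphic for
large `n`.  In particular, for any covariant `R`-linear functor `F` from `R`-modules to
`R`-modules, the sets `Ass_R F(IⁿM/Iⁿ⁺¹M)` stabilize. -/
theorem dedekind_graded_pieces_eventually_isomorphic
    {R : Type u} [CommRing R] [IsDomain R] [IsDedekindDomain R] (I : Ideal R)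
    (M : Type u) [AddCommGroup M] [Module R M] [Module.Finite R M] :
    (∃ N₀ : ℕ, ∀ n : ℕ, N₀ ≤ n →
      Nonempty
        ((↥(I ^ n • (⊤ : Submodule R M)) ⧸
            (Submodule.comap (I ^ n • (⊤ : Submodule R M)).subtype
              (I ^ (n + 1) • (⊤ : Submodule R M)))) ≃ₗ[R]
         (↥(I ^ N₀ • (⊤ : Submodule R M)) ⧸
            (Submodule.comap (I ^ N₀ • (⊤ : Submodule R M)).subtype
              (I ^ (N₀ + 1) • (⊤ : Submodule R M)))))) ∧
    (∀ (F : ModuleCat.{u} R ⥤ ModuleCat.{u} R) [F.Additive] [F.Linear R],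
      ∃ N₀ : ℕ, ∀ n : ℕ, N₀ ≤ n →
        associatedPrimes R (F.obj (ModuleCat.of R
          (↥(I ^ n • (⊤ : Submodule R M)) ⧸
            (Submodule.comap (I ^ n • (⊤ : Submodule R M)).subtype
              (I ^ (n + 1) • (⊤ : Submodule R M)))))) =
        associatedPrimes R (F.obj (ModuleCat.of R
          (↥(I ^ N₀ • (⊤ : Submodule R M)) ⧸
            (Submodule.comap (I ^ N₀ • (⊤ : Submodule R M)).subtype
              (I ^ (N₀ + 1) • (⊤ : Submodule R M))))))) :=
  dedekind_graded_pieces_eventually_isomorphic_general I M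
end
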